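/- Let 1 ≤ p < ∞ and f ∈ L^p(G_m). If ‖σ_{M_n} f − f‖_{L^p(G_m)} = o(1/M_n) as n → ∞, then f is almost everywhere equal to a constant. -/

import Mathlib

/-!
For `k < n` the `k`-th Fourier coefficient of `σ_n f - f` is `-(k/n) f̂(k)`, and it is bounded by
`‖σ_n f - f‖_1 ≤ ‖σ_n f - f‖_p`. With `n = M_N` the hypothesis therefore gives `k ‖f̂(k)‖ → 0`,
so `f̂(k) = 0` for all `k ≠ 0`. An integrable function with vanishing Fourier coefficients is zero
a.e.: by Paley's formula `D_{M_n} = M_n 1_{I_n}` its integral over each coset `x + I_n` is a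
combination of Fourier coefficients, and these cosets generate the product σ-algebra. Apply this
to `f - f̂(0)`.
-/

open MeasureTheory Filter Finset Asymptotics ENNReal NNReal

noncomputable section

namespace VilenkinPaper

/-- The Vilenkin group `G_m = ∏_k ℤ_{m_k}`. -/
abbrev G (m : ℕ → ℕ) : Type := ∀ k, ZMod (m k)

/-- The generalized powers `M_0 = 1`, `M_{k+1} = m_k M_k`. -/
def M (m : ℕ → ℕ) : ℕ → ℕ
  | 0 => 1
  | k + 1 => m k * M m k

/-- The basic neighborhoods `I_n = {y : y_0 = ⋯ = y_{n-1} = 0}`. -/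
def I (m : ℕ → ℕ) (n : ℕ) : Set (G m) := {y | ∀ k < n, y k = 0}

/-- The generalized Rademacher functions `r_k(x) = exp(2πi x_k / m_k)`. -/
def rad (m : ℕ → ℕ) (k : ℕ) (x : G m) : ℂ :=
  Complex.exp (2 * Real.pi * Complex.I * ((x k).val : ℂ) / (m k : ℂ))

/-- The `j`-th digit of `n` in the base determined by `m`. -/
def digit (m : ℕ → ℕ) (n j : ℕ) : ℕ := (n / M m j) % m j

/-- The Vilenkin functions `ψ_n = ∏_k r_k^{n_k}`. -/
def psi (m : ℕ → ℕ) (n : ℕ) (x : G m) : ℂ :=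
  ∏ᶠ k, rad m k x ^ digit m n k

/-- Vilenkin-Fourier coefficient `f̂(k) = ∫ f ψ̄_k dμ`. -/
def fourierCoeff (m : ℕ → ℕ) (μ : Measure (G m)) (f : G m → ℂ) (k : ℕ) : ℂ :=
  ∫ x, f x * (starRingEnd ℂ) (psi m k x) ∂μ

/-- Partial sums `S_n f = ∑_{k=0}^{n-1} f̂(k) ψ_k`. -/
def S (m : ℕ → ℕ) (μ : Measure (G m)) (n : ℕ) (f : G m → ℂ) (x : G m) : ℂ :=
  ∑ k ∈ Finset.range n, fourierCoeff m μ f k * psi m k x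

/-- Fejér means `σ_n f = (1/n) ∑_{k=1}^n S_k f`. -/
def sigma (m : ℕ → ℕ) (μ : Measure (G m)) (n : ℕ) (f : G m → ℂ) (x : G m) : ℂ :=
  (n : ℂ)⁻¹ * ∑ k ∈ Finset.Icc 1 n, S m μ k f x

/-- Dirichlet kernels `D_n = ∑_{k=0}^{n-1} ψ_k`. -/
def D (m : ℕ → ℕ) (n : ℕ) (x : G m) : ℂ := ∑ k ∈ Finset.range n, psi m k x

/-- Fejér kernels `K_n = (1/n) ∑_{k=1}^n D_k`. -/
def K (m : ℕ → ℕ) (n : ℕ) (x : G m) : ℂ := (n : ℂ)⁻¹ * ∑ k ∈ Finset.Icc 1 n, D m k x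

/-- Convolution `(g ∗ f)(x) = ∫ f(t) g(x - t) dμ(t)`. -/
def conv (m : ℕ → ℕ) (μ : Measure (G m)) (g f : G m → ℂ) (x : G m) : ℂ :=
  ∫ t, f t * g (x - t) ∂μ

/-- `Q_n = ∑_{k=0}^{n-1} q_k`. -/
def Q (q : ℕ → ℝ) (n : ℕ) : ℝ := ∑ k ∈ Finset.range n, q k

/-- Nörlund means `t_n f = (1/Q_n) ∑_{k=1}^n q_{n-k} S_k f`. -/
def T (m : ℕ → ℕ) (μ : Measure (G m)) (q : ℕ → ℝ) (n : ℕ) (f : G m → ℂ) (x : G m) : ℂ :=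
  ((Q q n : ℝ) : ℂ)⁻¹ * ∑ k ∈ Finset.Icc 1 n, ((q (n - k) : ℝ) : ℂ) * S m μ k f x

/-- The modulus of continuity `ω_p(1/M_n, f) = sup_{t ∈ I_n} ‖f(·+t) - f‖_p`. -/
def omega (m : ℕ → ℕ) (μ : Measure (G m)) (p : ℝ≥0∞) (f : G m → ℂ) (n : ℕ) : ℝ :=
  ⨆ t ∈ I m n, (eLpNorm (fun x => f (x + t) - f x) p μ).toReal

open ComplexConjugate Topology

section Numeration

variable {m : ℕ → ℕ}

lemma neZero_of_two_le (hm : ∀ k, 2 ≤ m k) (k : ℕ) : NeZero (m k) :=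
  ⟨by have := hm k; omega⟩

lemma M_succ (n : ℕ) : M m (n + 1) = m n * M m n := rfl

lemma M_pos [∀ k, NeZero (m k)] (n : ℕ) : 0 < M m n := by
  induction n with
  | zero => exact Nat.one_pos
  | succ n ih => exact Nat.mul_pos (NeZero.pos _) ih

lemma lt_M_self (hm : ∀ k, 2 ≤ m k) (n : ℕ) : n < M m n := by
  induction n with
  | zero => exact Nat.one_pos
  | succ n ih => rw [M_succ]; nlinarith [hm n]

lemma M_dvd_M {k n : ℕ} (h : k ≤ n) : M m k ∣ M m n := by
  induction n, h using Nat.le_induction with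
  | base => rfl
  | succ n _ ih => exact ih.trans (Dvd.intro_left _ rfl)

lemma M_mono [∀ k, NeZero (m k)] : Monotone (M m) :=
  fun _ _ h => Nat.le_of_dvd (M_pos _) (M_dvd_M h)

lemma digit_lt [∀ k, NeZero (m k)] (j k : ℕ) : digit m j k < m k :=
  Nat.mod_lt _ (NeZero.pos _)

lemma digit_eq_zero_of_lt {j k : ℕ} (h : j < M m k) : digit m j k = 0 := by
  simp [digit, Nat.div_eq_of_lt h]

lemma mod_M_succ (j n : ℕ) : j % M m (n + 1) = j % M m n + M m n * digit m j n := by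
  rw [M_succ, Nat.mul_comm, Nat.mod_mul, digit]

lemma exists_digit_ne (hm : ∀ k, 2 ≤ m k) {j k : ℕ} (h : j ≠ k) :
    ∃ i, digit m j i ≠ digit m k i := by
  by_contra! hdigit
  have hmod (n : ℕ) : j % M m n = k % M m n := by
    induction n with
    | zero => simp only [M, Nat.mod_one]
    | succ n ih => rw [mod_M_succ, mod_M_succ, ih, hdigit]
  have := neZero_of_two_le hm
  have hj := (lt_M_self hm j).trans_le (M_mono (m := m) (Nat.le_add_right j k))
  have hk := (lt_M_self hm k).trans_le (M_mono (m := m) (Nat.le_add_left k j))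
  exact h (by simpa [Nat.mod_eq_of_lt hj, Nat.mod_eq_of_lt hk] using hmod (j + k))

lemma digit_add_M_mul_of_lt [∀ k, NeZero (m k)] {r q k n : ℕ} (hk : k < n) :
    digit m (r + M m n * q) k = digit m r k := by
  obtain ⟨c, hc⟩ := M_dvd_M (m := m) hk
  rw [digit, digit, hc, M_succ, Nat.mul_assoc, Nat.mul_comm (m k), Nat.mul_assoc,
    Nat.add_mul_div_left _ _ (M_pos k), Nat.add_mul_mod_self_left]

lemma digit_add_M_mul_self [∀ k, NeZero (m k)] {r q n : ℕ} (hr : r < M m n) (hq : q < m n) :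
    digit m (r + M m n * q) n = q := by
  rw [digit, Nat.add_mul_div_left _ _ (M_pos n), Nat.div_eq_of_lt hr, Nat.zero_add,
    Nat.mod_eq_of_lt hq]

end Numeration

section Characters

variable {m : ℕ → ℕ}

lemma rad_eq_stdAddChar (k : ℕ) [NeZero (m k)] (x : G m) :
    rad m k x = ZMod.stdAddChar (x k) := by
  rw [rad, ZMod.stdAddChar_apply, ZMod.toCircle_apply]

lemma rad_add (k : ℕ) [NeZero (m k)] (x y : G m) : rad m k (x + y) = rad m k x * rad m k y := by
  simp only [rad_eq_stdAddChar, Pi.add_apply, AddChar.map_add_eq_mul]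

lemma rad_neg (k : ℕ) [NeZero (m k)] (x : G m) : rad m k (-x) = conj (rad m k x) := by
  simp only [rad_eq_stdAddChar, Pi.neg_apply, AddChar.map_neg_eq_conj]

lemma norm_rad (k : ℕ) [NeZero (m k)] (x : G m) : ‖rad m k x‖ = 1 := by
  rw [rad_eq_stdAddChar, AddChar.norm_apply]

lemma measurable_rad (k : ℕ) : Measurable (rad m k) := by
  unfold rad
  fun_prop

lemma psi_zero (x : G m) : psi m 0 x = 1 := by
  simp [psi, digit]

lemma psi_eq_prod [∀ k, NeZero (m k)] {j N : ℕ} (hj : j < M m N) (x : G m) :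
    psi m j x = ∏ k ∈ Finset.range N, rad m k x ^ digit m j k := by
  refine finprod_eq_prod_of_mulSupport_subset _ fun k hk => ?_
  by_contra hkN
  simp only [coe_range, Set.mem_Iio, not_lt] at hkN
  exact hk (by simp only [digit_eq_zero_of_lt (hj.trans_le (M_mono hkN)), pow_zero])

lemma psi_single (i j : ℕ) [NeZero (m i)] :
    psi m j (Pi.single i 1) = ZMod.stdAddChar (digit m j i : ZMod (m i)) := by
  rw [psi, finprod_eq_single _ i, rad_eq_stdAddChar, Pi.single_eq_same, ← AddChar.map_nsmul_eq_pow,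
    nsmul_one]
  intro k hk
  simp [rad, Pi.single_eq_of_ne hk]

variable (hm : ∀ k, 2 ≤ m k)
include hm

lemma psi_add (j : ℕ) (x y : G m) : psi m j (x + y) = psi m j x * psi m j y := by
  have := neZero_of_two_le hm
  simp only [psi_eq_prod (lt_M_self hm j), rad_add, mul_pow, prod_mul_distrib]

lemma psi_neg (j : ℕ) (x : G m) : psi m j (-x) = conj (psi m j x) := by
  have := neZero_of_two_le hm
  simp only [psi_eq_prod (lt_M_self hm j), rad_neg, map_prod, map_pow]

lemma norm_psi (j : ℕ) (x : G m) : ‖psi m j x‖ = 1 := by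
  have := neZero_of_two_le hm
  simp only [psi_eq_prod (lt_M_self hm j), norm_prod, norm_pow, norm_rad, one_pow, prod_const_one]

lemma measurable_psi (j : ℕ) : Measurable (psi m j) := by
  have := neZero_of_two_le hm
  simp only [funext (psi_eq_prod (m := m) (lt_M_self hm j))]
  exact Finset.measurable_prod _ fun k _ => (measurable_rad k).pow_const _

lemma psi_add_M_mul {r q n : ℕ} (hr : r < M m n) (hq : q < m n) (x : G m) :
    psi m (r + M m n * q) x = psi m r x * rad m n x ^ q := by
  have := neZero_of_two_le hm
  have hlt : r + M m n * q < M m (n + 1) := by rw [M_succ]; nlinarith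
  rw [psi_eq_prod hlt, prod_range_succ, psi_eq_prod hr, digit_add_M_mul_self hr hq]
  congr 1
  exact prod_congr rfl fun k hk => by rw [digit_add_M_mul_of_lt (mem_range.mp hk)]

end Characters

section Dirichlet

variable {m : ℕ → ℕ}

lemma sum_range_mul_eq_sum_sum {β : Type*} [AddCommMonoid β] (F : ℕ → β) (a b : ℕ) :
    ∑ j ∈ range (a * b), F j = ∑ q ∈ range a, ∑ r ∈ range b, F (r + b * q) := by
  induction a with
  | zero => simp
  | succ a ih =>
    rw [Nat.succ_mul, sum_range_add, ih, sum_range_succ]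
    exact congrArg _ (sum_congr rfl fun r _ => by rw [Nat.mul_comm, Nat.add_comm])

lemma sum_range_stdAddChar_pow (N : ℕ) [NeZero N] (z : ZMod N) :
    ∑ q ∈ range N, ZMod.stdAddChar z ^ q = if z = 0 then (N : ℂ) else 0 := by
  split_ifs with hz
  · simp [hz]
  · have hne : ZMod.stdAddChar z ≠ 1 := by
      rw [← AddChar.map_zero_eq_one (ZMod.stdAddChar (N := N))]
      exact ZMod.injective_stdAddChar.ne hz
    have hpow : ZMod.stdAddChar z ^ N = 1 := by
      rw [← AddChar.map_nsmul_eq_pow, nsmul_eq_mul, ZMod.natCast_self, zero_mul,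
        AddChar.map_zero_eq_one]
    have hgeom := geom_sum_mul (ZMod.stdAddChar z) N
    rw [hpow, sub_self] at hgeom
    exact (mul_eq_zero.mp hgeom).resolve_right (sub_ne_zero.mpr hne)

lemma mem_I_succ {n : ℕ} {y : G m} : y ∈ I m (n + 1) ↔ y ∈ I m n ∧ y n = 0 := by
  simp only [I, Set.mem_ofPred_eq, Nat.lt_succ_iff_lt_or_eq, or_imp, forall_and, forall_eq]

lemma D_M_eq_indicator (hm : ∀ k, 2 ≤ m k) (n : ℕ) (y : G m) :
    D m (M m n) y = (I m n).indicator (fun _ => (M m n : ℂ)) y := by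
  have := neZero_of_two_le hm
  induction n with
  | zero => simp [D, M, I, psi_zero]
  | succ n ih =>
    have hsplit : D m (M m (n + 1)) y = D m (M m n) y * ∑ q ∈ range (m n), rad m n y ^ q := by
      rw [D, M_succ, sum_range_mul_eq_sum_sum, D, mul_sum]
      refine sum_congr rfl fun q hq => ?_
      rw [sum_mul]
      exact sum_congr rfl fun r hr =>
        psi_add_M_mul hm (mem_range.mp hr) (mem_range.mp hq) y
    rw [hsplit, ih, rad_eq_stdAddChar, sum_range_stdAddChar_pow, M_succ]
    by_cases hIn : y ∈ I m n <;> by_cases hyn : y n = 0 <;>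
      simp [Set.indicator, hIn, hyn, mem_I_succ, mul_comm]

lemma D_sub (hm : ∀ k, 2 ≤ m k) (n : ℕ) (x y : G m) :
    D m n (x - y) = ∑ j ∈ range n, psi m j x * conj (psi m j y) := by
  simp only [D, sub_eq_add_neg, psi_add hm, psi_neg hm]

end Dirichlet

section FourierCoefficients

variable {m : ℕ → ℕ} (hm : ∀ k, 2 ≤ m k) (μ : Measure (G m))
include hm

lemma integrable_mul_conj_psi {g : G m → ℂ} (hg : Integrable g μ) (j : ℕ) :
    Integrable (fun x => g x * conj (psi m j x)) μ :=
  hg.mul_bdd (continuous_star.measurable.comp (measurable_psi hm j)).aestronglyMeasurable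
    (ae_of_all _ fun x => by rw [RCLike.norm_conj, norm_psi hm])

lemma memLp_psi [IsFiniteMeasure μ] (j : ℕ) (p : ℝ≥0∞) : MemLp (psi m j) p μ :=
  MemLp.of_bound (measurable_psi hm j).aestronglyMeasurable 1
    (ae_of_all _ fun x => (norm_psi hm j x).le)

lemma memLp_sum_psi [IsFiniteMeasure μ] (c : ℕ → ℂ) (n : ℕ) (p : ℝ≥0∞) :
    MemLp (fun x => ∑ j ∈ range n, c j * psi m j x) p μ :=
  memLp_finsetSum (range n) fun j _ => (memLp_psi hm μ j p).const_mul (c j)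

lemma integral_psi_mul_conj_psi [IsProbabilityMeasure μ] [μ.IsAddLeftInvariant] (j k : ℕ) :
    ∫ x, psi m j x * conj (psi m k x) ∂μ = if j = k then 1 else 0 := by
  split_ifs with hjk
  · subst hjk
    simp [RCLike.mul_conj, norm_psi hm]
  obtain ⟨i, hi⟩ := exists_digit_ne hm hjk
  have := neZero_of_two_le hm
  set F : G m → ℂ := fun x => psi m j x * conj (psi m k x)
  set t : G m := Pi.single i 1
  have hFt : F t ≠ 1 := by
    have hne : psi m j t ≠ psi m k t := by
      rw [psi_single, psi_single, ZMod.injective_stdAddChar.ne_iff,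
        Ne, ZMod.natCast_eq_natCast_iff' _ _ (m i), Nat.mod_eq_of_lt (digit_lt _ _),
        Nat.mod_eq_of_lt (digit_lt _ _)]
      exact hi
    have hk0 : psi m k t ≠ 0 := norm_ne_zero_iff.mp (by rw [norm_psi hm]; exact one_ne_zero)
    simp only [F, ← RCLike.inv_eq_conj (norm_psi hm k t), ← div_eq_mul_inv, Ne,
      div_eq_one_iff_eq hk0]
    exact hne
  have hinv : F t * ∫ x, F x ∂μ = ∫ x, F x ∂μ := by
    rw [← integral_const_mul, ← integral_add_left_eq_self (μ := μ) F t]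
    simp only [F, psi_add hm, map_mul]
    congr 1; ext x; ring
  have : (F t - 1) * ∫ x, F x ∂μ = 0 := by rw [sub_mul, hinv, one_mul, sub_self]
  exact (mul_eq_zero.mp this).resolve_left (sub_ne_zero.mpr hFt)

lemma fourierCoeff_sum_psi [IsProbabilityMeasure μ] [μ.IsAddLeftInvariant] (c : ℕ → ℂ)
    (n k : ℕ) :
    fourierCoeff m μ (fun x => ∑ j ∈ range n, c j * psi m j x) k = if k < n then c k else 0 := by
  have hint (j : ℕ) : Integrable (fun x => c j * (psi m j x * conj (psi m k x))) μ :=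
    (integrable_mul_conj_psi hm μ ((memLp_psi hm μ j 1).integrable le_rfl) k).const_mul _
  simp only [fourierCoeff, sum_mul, mul_assoc]
  rw [integral_finsetSum _ fun j _ => hint j]
  simp only [integral_const_mul, integral_psi_mul_conj_psi hm, mul_ite, mul_one, mul_zero,
    sum_ite_eq', mem_range]

lemma fourierCoeff_sub {f g : G m → ℂ} (hf : Integrable f μ) (hg : Integrable g μ) (k : ℕ) :
    fourierCoeff m μ (fun x => f x - g x) k = fourierCoeff m μ f k - fourierCoeff m μ g k := by
  simp only [fourierCoeff, sub_mul]
  exact integral_sub (integrable_mul_conj_psi hm μ hf k) (integrable_mul_conj_psi hm μ hg k)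

lemma norm_fourierCoeff_le_eLpNorm [IsProbabilityMeasure μ] {p : ℝ≥0∞} (hp : 1 ≤ p)
    {g : G m → ℂ} (hg : MemLp g p μ) (k : ℕ) :
    ‖fourierCoeff m μ g k‖ ≤ (eLpNorm g p μ).toReal :=
  calc ‖fourierCoeff m μ g k‖
      ≤ ∫ x, ‖g x * conj (psi m k x)‖ ∂μ := norm_integral_le_integral_norm _
    _ = (eLpNorm g 1 μ).toReal := by
        simp only [norm_mul, RCLike.norm_conj, norm_psi hm, mul_one]
        rw [eLpNorm_one_eq_lintegral_enorm, integral_norm_eq_lintegral_enorm hg.1]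
    _ ≤ (eLpNorm g p μ).toReal :=
        ENNReal.toReal_mono hg.eLpNorm_ne_top (eLpNorm_le_eLpNorm_of_exponent_le hp hg.1)

end FourierCoefficients

section Fejer

variable {m : ℕ → ℕ} (hm : ∀ k, 2 ≤ m k) (μ : Measure (G m))

lemma sum_Icc_sum_range {β : Type*} [AddCommMonoid β] (F : ℕ → β) (n : ℕ) :
    ∑ k ∈ Icc 1 n, ∑ j ∈ range k, F j = ∑ j ∈ range n, (n - j) • F j := by
  rw [sum_comm' (t' := range n) (s' := fun j => Icc (j + 1) n)
    (fun k j => by simp only [mem_Icc, mem_range]; omega)]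
  simp only [sum_const, Nat.card_Icc, Nat.add_sub_add_right]

lemma sigma_eq_sum_psi (n : ℕ) (f : G m → ℂ) (x : G m) :
    sigma m μ n f x = ∑ j ∈ range n, ((n - j : ℕ) / n * fourierCoeff m μ f j) * psi m j x := by
  simp only [sigma, S, sum_Icc_sum_range, mul_sum, nsmul_eq_mul]
  exact sum_congr rfl fun j _ => by ring

include hm

lemma memLp_sigma [IsFiniteMeasure μ] (n : ℕ) (f : G m → ℂ) (p : ℝ≥0∞) :
    MemLp (sigma m μ n f) p μ := by
  rw [funext (sigma_eq_sum_psi μ n f)]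
  exact memLp_sum_psi hm μ _ n p

variable [IsProbabilityMeasure μ] [μ.IsAddLeftInvariant]

lemma fourierCoeff_sigma (f : G m → ℂ) {n k : ℕ} (hk : k < n) :
    fourierCoeff m μ (sigma m μ n f) k = (n - k : ℕ) / n * fourierCoeff m μ f k := by
  rw [funext (sigma_eq_sum_psi μ n f), fourierCoeff_sum_psi hm μ, if_pos hk]

lemma mul_norm_fourierCoeff_le_eLpNorm_sigma_sub {p : ℝ≥0∞} (hp : 1 ≤ p) {f : G m → ℂ}
    (hf : MemLp f p μ) {n k : ℕ} (hk : k < n) :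
    k / n * ‖fourierCoeff m μ f k‖ ≤ (eLpNorm (fun x => sigma m μ n f x - f x) p μ).toReal := by
  have hσ := memLp_sigma hm μ n f p
  have hn : (n : ℂ) ≠ 0 := Nat.cast_ne_zero.mpr (by omega)
  have hcoeff : fourierCoeff m μ (fun x => sigma m μ n f x - f x) k
      = -(k / n) * fourierCoeff m μ f k := by
    rw [fourierCoeff_sub hm μ (hσ.integrable hp) (hf.integrable hp), fourierCoeff_sigma hm μ f hk,
      Nat.cast_sub hk.le]
    field_simp
    ring
  calc k / n * ‖fourierCoeff m μ f k‖
      = ‖fourierCoeff m μ (fun x => sigma m μ n f x - f x) k‖ := by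
        rw [hcoeff, norm_mul, norm_neg, norm_div, Complex.norm_natCast, Complex.norm_natCast]
    _ ≤ _ := norm_fourierCoeff_le_eLpNorm hm μ hp (hσ.sub hf) k

lemma fourierCoeff_eq_zero_of_fejer_littleO {p : ℝ≥0∞} (hp : 1 ≤ p) {f : G m → ℂ}
    (hf : MemLp f p μ)
    (h : (fun n : ℕ => (eLpNorm (fun x => sigma m μ (M m n) f x - f x) p μ).toReal)
      =o[atTop] fun n : ℕ => ((M m n : ℝ))⁻¹)
    {k : ℕ} (hk : k ≠ 0) : fourierCoeff m μ f k = 0 := by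
  have := neZero_of_two_le hm
  have hlim : Tendsto (fun n => (eLpNorm (fun x => sigma m μ (M m n) f x - f x) p μ).toReal
      * M m n) atTop (𝓝 0) := by
    simpa only [div_inv_eq_mul] using h.tendsto_div_nhds_zero
  have hbound : ∀ᶠ n in atTop, k * ‖fourierCoeff m μ f k‖
      ≤ (eLpNorm (fun x => sigma m μ (M m n) f x - f x) p μ).toReal * M m n := by
    filter_upwards [eventually_ge_atTop k] with n hn
    have hM : (0 : ℝ) < M m n := Nat.cast_pos.mpr (M_pos n)
    rw [← div_le_iff₀ hM, mul_div_right_comm]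
    exact mul_norm_fourierCoeff_le_eLpNorm_sigma_sub hm μ hp hf
      ((lt_M_self hm k).trans_le (M_mono hn))
  have hk' : (0 : ℝ) < k := Nat.cast_pos.mpr (Nat.pos_of_ne_zero hk)
  have hle : k * ‖fourierCoeff m μ f k‖ ≤ 0 := ge_of_tendsto hlim hbound
  exact norm_le_zero_iff.mp (nonpos_of_mul_nonpos_right hle hk')

end Fejer

section Uniqueness

variable {m : ℕ → ℕ} (hm : ∀ k, 2 ≤ m k) (μ : Measure (G m))

lemma measurableSet_coset (n : ℕ) (x : G m) : MeasurableSet {y : G m | ∀ k < n, y k = x k} :=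
  MeasurableSet.pi (Set.to_countable (Set.Iio n)) fun k _ => measurableSet_singleton (x k)

include hm
variable {g : G m → ℂ} (hg : Integrable g μ)
  (h0 : ∀ j, fourierCoeff m μ g j = 0)
include hg h0

lemma setIntegral_coset_eq_zero (n : ℕ) (x : G m) :
    ∫ y in {y : G m | ∀ k < n, y k = x k}, g y ∂μ = 0 := by
  have := neZero_of_two_le hm
  have hind (y : G m) : {y : G m | ∀ k < n, y k = x k}.indicator g y
      = (M m n : ℂ)⁻¹ * ∑ j ∈ range (M m n), psi m j x * (g y * conj (psi m j y)) := by
    have hM : (M m n : ℂ) ≠ 0 := Nat.cast_ne_zero.mpr (M_pos n).ne'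
    simp only [← mul_sum, mul_left_comm _ (g y), ← D_sub hm, D_M_eq_indicator hm]
    have hmem : x - y ∈ I m n ↔ ∀ k < n, y k = x k := by
      simp only [I, Set.mem_ofPred_eq, Pi.sub_apply, sub_eq_zero, eq_comm]
    by_cases hy : ∀ k < n, y k = x k
    · rw [Set.indicator_of_mem (s := {y : G m | ∀ k < n, y k = x k}) hy,
        Set.indicator_of_mem (hmem.mpr hy)]
      field_simp
    · rw [Set.indicator_of_notMem (s := {y : G m | ∀ k < n, y k = x k}) hy,
        Set.indicator_of_notMem (mt hmem.mp hy), mul_zero, mul_zero]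
  rw [← integral_indicator (measurableSet_coset n x), integral_congr_ae (ae_of_all _ hind),
    integral_const_mul, integral_finsetSum _ fun j _ =>
      (integrable_mul_conj_psi hm μ hg j).const_mul _]
  have hcoeff (j : ℕ) : ∫ y, g y * conj (psi m j y) ∂μ = 0 := h0 j
  simp only [integral_const_mul, hcoeff, mul_zero, sum_const_zero]

lemma setIntegral_cylinder_eq_zero (N : ℕ) (S : Set (∀ i : Iic N, ZMod (m i))) :
    ∫ y in (cylinder (Iic N) S : Set (G m)), g y ∂μ = 0 := by
  have := neZero_of_two_le hm
  have hunion : (cylinder (Iic N) S : Set (G m))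
      = ⋃ c : S, (cylinder (Iic N) {c.1} : Set (G m)) := by
    ext y; simp [mem_cylinder]
  have hpoint (c : ∀ i : Iic N, ZMod (m i)) :
      ∫ y in (cylinder (Iic N) {c} : Set (G m)), g y ∂μ = 0 := by
    rcases (cylinder (Iic N) {c} : Set (G m)).eq_empty_or_nonempty with hempty | ⟨x, hx⟩
    · rw [hempty, Measure.restrict_empty, integral_zero_measure]
    · convert setIntegral_coset_eq_zero hm μ hg h0 (N + 1) x using 3
      replace hx : (Iic N).restrict x = c := hx
      ext y
      simp only [mem_cylinder, Set.mem_singleton_iff, ← hx, funext_iff, Finset.restrict,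
        Subtype.forall, mem_Iic, Set.mem_ofPred_eq, Nat.lt_succ_iff]
  have hdisj : Pairwise (Function.onFun Disjoint
      fun c : S => (cylinder (Iic N) {c.1} : Set (G m))) := fun c c' hcc' =>
    Set.disjoint_left.mpr fun y (hy : _ = c.1) (hy' : _ = c'.1) =>
      hcc' (Subtype.ext (hy.symm.trans hy'))
  rw [hunion, integral_iUnion (fun c => (measurableSet_singleton _).cylinder) hdisj
    hg.integrableOn]
  simp [hpoint]

lemma ae_eq_zero_of_fourierCoeff_eq_zero : g =ᵐ[μ] 0 := by
  suffices h : ∀ s, MeasurableSet s → ∫ x in s, g x ∂μ = 0 from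
    hg.ae_eq_zero_of_forall_setIntegral_eq_zero fun s hs _ => h s hs
  intro s hs
  induction s, hs using MeasurableSpace.induction_on_inter
    generateFrom_measurableCylinders.symm isPiSystem_measurableCylinders with
  | empty => simp
  | basic t ht =>
    simp only [measurableCylinders_nat, Set.mem_iUnion, Set.mem_singleton_iff] at ht
    obtain ⟨N, S, -, rfl⟩ := ht
    exact setIntegral_cylinder_eq_zero hm μ hg h0 N S
  | compl t ht iht =>
    have htotal : ∫ x, g x ∂μ = 0 := by simpa [fourierCoeff, psi_zero] using h0 0
    rwa [← integral_add_compl ht hg, iht, zero_add] at htotal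
  | iUnion t htd htm iht =>
    rw [integral_iUnion htm htd hg.integrableOn]
    simp [iht]

end Uniqueness

section Constant

variable {m : ℕ → ℕ} (hm : ∀ k, 2 ≤ m k) (μ : Measure (G m)) [IsProbabilityMeasure μ]
  [μ.IsAddLeftInvariant]
include hm

lemma fourierCoeff_const (c : ℂ) (k : ℕ) :
    fourierCoeff m μ (fun _ => c) k = if k = 0 then c else 0 := by
  simpa [psi_zero] using fourierCoeff_sum_psi hm μ (fun _ => c) 1 k

lemma ae_eq_const_of_fourierCoeff_eq_zero {f : G m → ℂ} (hf : Integrable f μ)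
    (h : ∀ k ≠ 0, fourierCoeff m μ f k = 0) : f =ᵐ[μ] fun _ => fourierCoeff m μ f 0 := by
  set c := fourierCoeff m μ f 0
  have hg : Integrable (fun x => f x - c) μ := hf.sub (integrable_const c)
  have h0 (k : ℕ) : fourierCoeff m μ (fun x => f x - c) k = 0 := by
    rw [fourierCoeff_sub hm μ hf (integrable_const c), fourierCoeff_const hm μ]
    rcases eq_or_ne k 0 with rfl | hk
    · exact sub_self c
    · rw [h k hk, if_neg hk, sub_zero]
  filter_upwards [ae_eq_zero_of_fourierCoeff_eq_zero hm μ hg h0] with x hx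
  exact sub_eq_zero.mp hx

end Constant

theorem constant_of_fejer_littleO_general
    (m : ℕ → ℕ) (hm : ∀ k, 2 ≤ m k)
    (μ : Measure (G m)) [IsProbabilityMeasure μ] [μ.IsAddHaarMeasure]
    (p : ℝ≥0∞) (hp : 1 ≤ p)
    (f : G m → ℂ) (hf : MemLp f p μ)
    (h : (fun n : ℕ => (eLpNorm (fun x => sigma m μ (M m n) f x - f x) p μ).toReal)
      =o[atTop] fun n : ℕ => ((M m n : ℝ))⁻¹) :
    ∃ c : ℂ, f =ᵐ[μ] fun _ => c :=
  ⟨_, ae_eq_const_of_fourierCoeff_eq_zero hm μ (hf.integrable hp) fun _ hk =>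
    fourierCoeff_eq_zero_of_fejer_littleO hm μ hp hf h hk⟩

/-- if `‖σ_(M_n) f - f‖_p = o(1/M_n)` then `f` is a.e. constant. -/
theorem constant_of_fejer_littleO
    (m : ℕ → ℕ) (hm : ∀ k, 2 ≤ m k)
    (R : ℝ) (hR : IsLUB (Set.range fun k => (m k : ℝ)) R)
    (μ : Measure (G m)) [IsProbabilityMeasure μ] [μ.IsAddHaarMeasure]
    (p : ℝ≥0∞) (hp : 1 ≤ p) (hp' : p ≠ ∞)
    (f : G m → ℂ) (hf : MemLp f p μ)
    (h : (fun n : ℕ => (eLpNorm (fun x => sigma m μ (M m n) f x - f x) p μ).toReal)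
      =o[atTop] fun n : ℕ => ((M m n : ℝ))⁻¹) :
    ∃ c : ℂ, f =ᵐ[μ] fun _ => c :=
  constant_of_fejer_littleO_general m hm μ p hp f hf h

end VilenkinPaper
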